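/- Let (G, σ) be a signed graph and let (G', σ') be obtained from (G, σ) by subdividing an edge xy: if xy is negative, replace it by a path x–z–y with xz positive and zy negative; if xy is positive, replace it by a path x–z–y with both edges positive. Then F(G', σ') = F(G, σ). -/
import Mathlib


open scoped Classical

/-- The Boolean indicating whether an edge crosses the vertex set `X`. -/
noncomputable def sgnCross {V : Type*} (X : Set V) : Sym2 V → Bool :=
  Sym2.lift ⟨fun a b => xor (decide (a ∈ X)) (decide (b ∈ X)),
    fun a b => Bool.xor_comm _ _⟩

/-- The signature obtained from `σ` by switching at the edge-cut `[X, Xᶜ]`: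
the signs of all edges crossing `X` are flipped.  (`true` = negative.) -/
noncomputable def sgnSwitch {V : Type*} (σ : Sym2 V → Bool) (X : Set V) : Sym2 V → Bool :=
  fun e => xor (σ e) (sgnCross X e)

/-- The number of negative edges of the signed graph `(G, σ)`. -/
noncomputable def negNum {V : Type*} (G : SimpleGraph V) (σ : Sym2 V → Bool) : ℕ :=
  {e | e ∈ G.edgeSet ∧ σ e = true}.ncard

/-- The frustration index of `(G, σ)`: the minimum number of negative edges over
all switching-equivalent signatures. -/
noncomputable def frust {V : Type*} (G : SimpleGraph V) (σ : Sym2 V → Bool) : ℕ :=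
  ⨅ X : Set V, negNum G (sgnSwitch σ X)

/-- The number of edges of `G` in the edge-cut `[X, Xᶜ]`. -/
noncomputable def cutSize {V : Type*} (G : SimpleGraph V) (X : Set V) : ℕ :=
  {e | e ∈ G.edgeSet ∧ sgnCross X e = true}.ncard

/-- A graph is 2-edge-connected if every edge-cut has at least 2 edges. -/
def TwoEdgeConn {V : Type*} (G : SimpleGraph V) : Prop :=
  ∀ X : Set V, X.Nonempty → Xᶜ.Nonempty → 2 ≤ cutSize G X

-- auxiliary lemmas
lemma none_ne_mapsome {V : Type*} (u : V) (e : Sym2 V) :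
    s(some u, (none : Option V)) ≠ Sym2.map some e := by
  induction e using Sym2.ind with
  | _ a b => simp [Sym2.map_pair_eq, Sym2.eq_iff]

lemma sgnCross_mk {V : Type*} (X : Set V) (a b : V) :
    sgnCross X s(a, b) = xor (decide (a ∈ X)) (decide (b ∈ X)) := rfl


/-- Subdividing an edge `xy` (into a positive edge `xz` and an edge
`zy` of the same sign as `xy`, where `z` is a new vertex) does not change the
frustration index. -/
theorem frust_subdivide {V : Type*} [Fintype V]
    (G : SimpleGraph V) (σ : Sym2 V → Bool) (x y : V) (hxy : G.Adj x y) :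
    frust
      (SimpleGraph.fromEdgeSet
        ((Sym2.map (some : V → Option V) '' (G.edgeSet \ {s(x, y)})) ∪
          {s(some x, (none : Option V)), s(some y, (none : Option V))}))
      (fun e =>
        if e = s(some x, (none : Option V)) then false
        else if e = s(some y, (none : Option V)) then σ s(x, y)
        else σ (Sym2.map (fun o => o.getD x) e)) = frust G σ := by
  classical
  have hne : x ≠ y := hxy.ne
  set S : Set (Sym2 (Option V)) :=
    (Sym2.map (some : V → Option V) '' (G.edgeSet \ {s(x, y)})) ∪
      {s(some x, (none : Option V)), s(some y, (none : Option V))} with hS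
  set σ' : Sym2 (Option V) → Bool := fun e =>
    if e = s(some x, (none : Option V)) then false
    else if e = s(some y, (none : Option V)) then σ s(x, y)
    else σ (Sym2.map (fun o => o.getD x) e) with hσ'
  set G' := SimpleGraph.fromEdgeSet S with hG'
  -- edge set of G'
  have hES : G'.edgeSet = S := by
    rw [hG', SimpleGraph.edgeSet_fromEdgeSet]
    refine sdiff_eq_left.mpr (Set.disjoint_left.mpr ?_)
    rintro e heS hdiag
    rcases heS with ⟨e₀, ⟨he₀G, -⟩, rfl⟩ | (rfl | rfl)
    · induction e₀ using Sym2.ind with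
      | _ a b =>
        have : a ≠ b := he₀G.ne
        simp [Sym2.map_pair_eq, Sym2.isDiag_iff_proj_eq] at hdiag
        exact this hdiag
    · simp [Sym2.isDiag_iff_proj_eq] at hdiag
    · simp [Sym2.isDiag_iff_proj_eq] at hdiag
  -- sign computations
  have hσ'x : σ' s(some x, (none : Option V)) = false := by simp [hσ']
  have hσ'y : σ' s(some y, (none : Option V)) = σ s(x, y) := by
    simp [hσ', Sym2.eq_iff, hne.symm]
  have hσ'map : ∀ e : Sym2 V, σ' (Sym2.map some e) = σ e := by
    intro e
    induction e using Sym2.ind with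
    | _ a b =>
      simp [hσ', Sym2.map_pair_eq, Sym2.eq_iff]
  -- key: switched sign of mapped edges
  have hmap : ∀ (X' : Set (Option V)) (e : Sym2 V),
      sgnSwitch σ' X' (Sym2.map some e) = sgnSwitch σ (some ⁻¹' X') e := by
    intro X' e
    induction e using Sym2.ind with
    | _ a b =>
      have hs := hσ'map s(a, b)
      rw [Sym2.map_pair_eq] at hs
      simp only [sgnSwitch, Sym2.map_pair_eq, hs]
      rfl
  -- membership lemmas
  have hmemS : ∀ e : Sym2 V, e ∈ G.edgeSet → e ≠ s(x, y) → Sym2.map some e ∈ S := by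
    intro e he hne'
    exact Or.inl ⟨e, ⟨he, hne'⟩, rfl⟩
  have hxS : s(some x, (none : Option V)) ∈ S := Or.inr (Or.inl rfl)
  have hyS : s(some y, (none : Option V)) ∈ S := Or.inr (Or.inr rfl)
  -- Direction 1 : frust G' σ' ≤ frust G σ
  have h1 : frust G' σ' ≤ frust G σ := by
    rw [frust, frust]
    refine le_ciInf fun X => ?_
    set X' : Set (Option V) := {o : Option V | o.getD x ∈ X} with hX'
    have hpre : some ⁻¹' X' = X := by ext a; simp [hX']
    have hτ'x : sgnSwitch σ' X' s(some x, (none : Option V)) = false := by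
      simp [sgnSwitch, hσ'x, sgnCross_mk, hX']
    have hτ'y : sgnSwitch σ' X' s(some y, (none : Option V)) = sgnSwitch σ X s(x, y) := by
      simp only [sgnSwitch, hσ'y, sgnCross_mk, hX', Set.mem_setOf_eq, Option.getD_some,
        Option.getD_none]
      cases decide (x ∈ X) <;> cases decide (y ∈ X) <;> simp
    set f : Sym2 V → Sym2 (Option V) := fun e =>
      if e = s(x, y) then s(some y, (none : Option V)) else Sym2.map some e with hf
    have hfxy : f s(x, y) = s(some y, (none : Option V)) := by simp [hf]
    have hfne : ∀ e : Sym2 V, e ≠ s(x, y) → f e = Sym2.map some e := by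
      intro e h; simp [hf, h]
    have hfinj : Function.Injective f := by
      intro e₁ e₂ h
      by_cases h₁ : e₁ = s(x, y) <;> by_cases h₂ : e₂ = s(x, y)
      · rw [h₁, h₂]
      · rw [hf] at h; simp only [if_pos h₁, if_neg h₂] at h
        exact absurd h (none_ne_mapsome y e₂)
      · rw [hf] at h; simp only [if_pos h₂, if_neg h₁] at h
        exact absurd h.symm (none_ne_mapsome y e₁)
      · rw [hf] at h; simp only [if_neg h₁, if_neg h₂] at h
        exact Sym2.map.injective (Option.some_injective V) h
    have hset : {e | e ∈ G'.edgeSet ∧ sgnSwitch σ' X' e = true}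
        = f '' {e | e ∈ G.edgeSet ∧ sgnSwitch σ X e = true} := by
      ext e'
      simp only [Set.mem_setOf_eq, Set.mem_image, hES]
      constructor
      · rintro ⟨heS, hneg⟩
        rcases heS with ⟨e, ⟨heG, henexy⟩, rfl⟩ | (rfl | rfl)
        · rw [Set.mem_singleton_iff] at henexy
          refine ⟨e, ⟨heG, ?_⟩, (hfne e henexy).symm ▸ rfl⟩
          rw [← hpre, ← hmap X' e]; exact hneg
        · rw [hτ'x] at hneg; exact absurd hneg (by simp)
        · exact ⟨s(x, y), ⟨hxy, by rw [← hτ'y]; exact hneg⟩, hfxy⟩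
      · rintro ⟨e, ⟨heG, hneg⟩, rfl⟩
        by_cases hexy : e = s(x, y)
        · subst hexy
          rw [hfxy]
          exact ⟨hyS, by rw [hτ'y]; exact hneg⟩
        · rw [hfne e hexy]
          exact ⟨hmemS e heG hexy, by rw [hmap X' e, hpre]; exact hneg⟩
    calc (⨅ Y : Set (Option V), negNum G' (sgnSwitch σ' Y))
        ≤ negNum G' (sgnSwitch σ' X') := ciInf_le (OrderBot.bddBelow _) _
      _ = negNum G (sgnSwitch σ X) := by
          rw [negNum, negNum, hset, Set.ncard_image_of_injective _ hfinj]
  -- Direction 2 : frust G σ ≤ frust G' σ'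
  have h2 : frust G σ ≤ frust G' σ' := by
    rw [frust, frust]
    refine le_ciInf fun X' => ?_
    set X : Set V := some ⁻¹' X' with hX
    -- the xor of the two path edges equals the switched sign of xy
    have hxor : xor (sgnSwitch σ' X' s(some x, (none : Option V)))
        (sgnSwitch σ' X' s(some y, (none : Option V))) = sgnSwitch σ X s(x, y) := by
      simp only [sgnSwitch, hσ'x, hσ'y, sgnCross_mk, hX, Set.mem_preimage]
      cases σ s(x, y) <;> cases decide (some x ∈ X') <;> cases decide (some y ∈ X') <;>
        cases decide ((none : Option V) ∈ X') <;> rfl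
    set t : Sym2 (Option V) :=
      if sgnSwitch σ' X' s(some y, (none : Option V)) = true
        then s(some y, (none : Option V)) else s(some x, (none : Option V)) with ht
    set g : Sym2 V → Sym2 (Option V) := fun e =>
      if e = s(x, y) then t else Sym2.map some e with hg
    have hgxy : g s(x, y) = t := by simp [hg]
    have hgne : ∀ e : Sym2 V, e ≠ s(x, y) → g e = Sym2.map some e := by
      intro e h; simp [hg, h]
    have hginj : Function.Injective g := by
      have htnone : ∀ e : Sym2 V, t ≠ Sym2.map some e := by
        intro e
        rw [ht]
        split
        · exact none_ne_mapsome y e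
        · exact none_ne_mapsome x e
      intro e₁ e₂ h
      by_cases h₁ : e₁ = s(x, y) <;> by_cases h₂ : e₂ = s(x, y)
      · rw [h₁, h₂]
      · rw [hg] at h; simp only [if_pos h₁, if_neg h₂] at h
        exact absurd h (htnone e₂)
      · rw [hg] at h; simp only [if_pos h₂, if_neg h₁] at h
        exact absurd h.symm (htnone e₁)
      · rw [hg] at h; simp only [if_neg h₁, if_neg h₂] at h
        exact Sym2.map.injective (Option.some_injective V) h
    have hsub : g '' {e | e ∈ G.edgeSet ∧ sgnSwitch σ X e = true}
        ⊆ {e | e ∈ G'.edgeSet ∧ sgnSwitch σ' X' e = true} := by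
      rintro e' ⟨e, ⟨heG, hneg⟩, rfl⟩
      by_cases hexy : e = s(x, y)
      · subst hexy
        rw [hgxy]
        rw [← hxor] at hneg
        rw [ht]
        by_cases h2 : sgnSwitch σ' X' s(some y, (none : Option V)) = true
        · rw [if_pos h2, Set.mem_setOf_eq, hES]; exact ⟨hyS, h2⟩
        · rw [if_neg h2, Set.mem_setOf_eq, hES]
          refine ⟨hxS, ?_⟩
          simp only [Bool.not_eq_true] at h2
          rw [h2] at hneg
          simpa using hneg
      · rw [hgne e hexy]
        rw [Set.mem_setOf_eq, hES]
        exact ⟨hmemS e heG hexy, by rw [hmap X' e]; exact hneg⟩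
    calc (⨅ Y : Set V, negNum G (sgnSwitch σ Y))
        ≤ negNum G (sgnSwitch σ X) := ciInf_le (OrderBot.bddBelow _) _
      _ = (g '' {e | e ∈ G.edgeSet ∧ sgnSwitch σ X e = true}).ncard := by
          rw [negNum, Set.ncard_image_of_injective _ hginj]
      _ ≤ negNum G' (sgnSwitch σ' X') := by
          rw [negNum]
          exact Set.ncard_le_ncard hsub (Set.toFinite _)
  exact le_antisymm h1 h2
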